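/- Let ψ and φ be pure states on ℂ^d with rank Δ(φ) = rank Δ(ψ). If there exists an incoherent operation T with T(|φ⟩⟨φ|) = |ψ⟩⟨ψ|, then Δ(ψ) majorizes Δ(φ), i.e., Δ(ψ) ≻ Δ(φ). -/

import Mathlib

/-!
Each Kraus operator `K ℓ` sends `φ` to a multiple `μ ℓ • ψ`, since a sum of rank-one projectors
equal to a rank-one projector has all its terms proportional to it. Being incoherent, `K ℓ` sends
the basis vector `i` into the line of a single basis vector `J ℓ i`; if `μ ℓ ≠ 0`, `J ℓ` maps the
support of `φ` onto that of `ψ`, hence bijectively as the two supports have the same size. Taking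
moduli gives `|μ ℓ|² |ψ (J ℓ i)|² = |K ℓ (J ℓ i) i|² |φ i|²`; summing over `ℓ`, completeness of the
Kraus operators bounds the left side by `|φ i|²`, and as both sides sum to `1` over the support,
`|φ i|² = ∑ ℓ |μ ℓ|² |ψ (J ℓ i)|²`. A convex combination of injective relabelings of a nonnegative
vector `q` is majorized by `q`.
-/

namespace Coherence

open Matrix
open scoped BigOperators ComplexOrder

variable {ι κ : Type*} [Fintype ι] [DecidableEq ι] [Fintype κ] [DecidableEq κ]

/-- A density matrix: positive semidefinite with unit trace. -/
def IsDensity (ρ : Matrix ι ι ℂ) : Prop := ρ.PosSemidef ∧ ρ.trace = 1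

/-- The dephasing (decohering) map Δ in the fixed (incoherent) basis. -/
def dephase (ρ : Matrix ι ι ℂ) : Matrix ι ι ℂ := Matrix.diagonal (fun i => ρ i i)

/-- The pure state |v⟩⟨v| associated with a vector `v`. -/
def pureState (v : ι → ℂ) : Matrix ι ι ℂ := Matrix.of fun i j => v i * star (v j)

/-- `v` is a unit vector. -/
def IsUnitVec (v : ι → ℂ) : Prop := ∑ i, ‖v i‖ ^ 2 = 1

/-- An incoherent Kraus operator: each column has at most one nonzero entry,
i.e. `K = ∑ i c(i) |j(i)⟩⟨i|` for a function `j` on basis indices. -/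
def IncoherentKraus (K : Matrix κ ι ℂ) : Prop :=
  ∀ i : ι, ∃ j : κ, ∀ j' : κ, K j' i ≠ 0 → j' = j

/-- A strictly incoherent Kraus operator: `K` and `K†` are both incoherent. -/
def StrictlyIncoherentKraus (K : Matrix κ ι ℂ) : Prop :=
  IncoherentKraus K ∧ IncoherentKraus Kᴴ

/-- An incoherent operation: a cptp map admitting a Kraus representation by
incoherent Kraus operators. -/
def IsIncoherentOp (T : Matrix ι ι ℂ → Matrix κ κ ℂ) : Prop :=
  ∃ (m : ℕ) (K : Fin m → Matrix κ ι ℂ),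
    (∀ ℓ, IncoherentKraus (K ℓ)) ∧
    (∑ ℓ, (K ℓ)ᴴ * K ℓ = 1) ∧
    (∀ ρ, T ρ = ∑ ℓ, K ℓ * ρ * (K ℓ)ᴴ)

/-- A strictly incoherent operation. -/
def IsStrictlyIncoherentOp (T : Matrix ι ι ℂ → Matrix κ κ ℂ) : Prop :=
  ∃ (m : ℕ) (K : Fin m → Matrix κ ι ℂ),
    (∀ ℓ, StrictlyIncoherentKraus (K ℓ)) ∧
    (∑ ℓ, (K ℓ)ᴴ * K ℓ = 1) ∧
    (∀ ρ, T ρ = ∑ ℓ, K ℓ * ρ * (K ℓ)ᴴ)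

/-- Functional calculus for Hermitian matrices (junk value `0` otherwise). -/
noncomputable def matFun (f : ℝ → ℝ) (A : Matrix ι ι ℂ) : Matrix ι ι ℂ :=
  if h : A.IsHermitian then
    (h.eigenvectorUnitary : Matrix ι ι ℂ) *
      Matrix.diagonal (fun i => (f (h.eigenvalues i) : ℂ)) *
      (star (h.eigenvectorUnitary : Matrix ι ι ℂ))
  else 0

/-- Von Neumann entropy `S(ρ) = −tr ρ log₂ ρ` (with the convention 0 log 0 = 0). -/
noncomputable def vN (ρ : Matrix ι ι ℂ) : ℝ :=
  if h : ρ.IsHermitian then -∑ i, h.eigenvalues i * Real.logb 2 (h.eigenvalues i) else 0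

noncomputable def matLog2 (A : Matrix ι ι ℂ) : Matrix ι ι ℂ := matFun (Real.logb 2) A

noncomputable def matSqrt (A : Matrix ι ι ℂ) : Matrix ι ι ℂ := matFun Real.sqrt A

/-- Quantum relative entropy `S(ρ‖σ) = tr ρ (log₂ ρ − log₂ σ)`. -/
noncomputable def relEnt (ρ σ : Matrix ι ι ℂ) : ℝ :=
  ((ρ * (matLog2 ρ - matLog2 σ)).trace).re

/-- Fidelity `F(ρ,σ) = tr √(√ρ σ √ρ)`. -/
noncomputable def fidelity (ρ σ : Matrix ι ι ℂ) : ℝ :=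
  ((matSqrt (matSqrt ρ * σ * matSqrt ρ)).trace).re

/-- Trace norm `‖A‖₁ = tr √(A†A)`. -/
noncomputable def traceNorm (A : Matrix ι ι ℂ) : ℝ :=
  ((matSqrt (Aᴴ * A)).trace).re

/-- Bures distance `B(ρ,σ) = √2 √(1 − F(ρ,σ))`. -/
noncomputable def bures (ρ σ : Matrix ι ι ℂ) : ℝ :=
  Real.sqrt 2 * Real.sqrt (1 - fidelity ρ σ)

/-- Binary entropy function. -/
noncomputable def binEnt (x : ℝ) : ℝ :=
  -(x * Real.logb 2 x) - (1 - x) * Real.logb 2 (1 - x)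

/-- The `n`-fold tensor (Kronecker) power of a matrix, with indices the product basis. -/
def tpow (ρ : Matrix ι ι ℂ) (n : ℕ) : Matrix (Fin n → ι) (Fin n → ι) ℂ :=
  Matrix.of fun i j => ∏ t, ρ (i t) (j t)

/-- The unit (qubit maximally coherent) state Φ₂. -/
noncomputable def Phi2 : Matrix (Fin 2) (Fin 2) ℂ := Matrix.of fun _ _ => (1 / 2 : ℂ)

/-- Relative entropy of coherence `C_r(ρ) = S(Δ(ρ)) − S(ρ)`. -/
noncomputable def Cr (ρ : Matrix ι ι ℂ) : ℝ := vN (dephase ρ) - vN ρ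

/-- Coherence of formation: the least average entropy of coherence over finite
pure-state decompositions of `ρ`. -/
noncomputable def Cf (ρ : Matrix ι ι ℂ) : ℝ :=
  sInf {x | ∃ (m : ℕ) (p : Fin m → ℝ) (v : Fin m → ι → ℂ),
    (∀ k, 0 ≤ p k) ∧ (∀ k, IsUnitVec (v k)) ∧
    ρ = ∑ k, (p k : ℂ) • pureState (v k) ∧
    x = ∑ k, p k * vN (dephase (pureState (v k)))}

/-- `R` is an achievable coherence-distillation rate for `ρ`. -/
def DistillRate {d : ℕ} (ρ : Matrix (Fin d) (Fin d) ℂ) (R : ℝ) : Prop :=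
  0 ≤ R ∧ ∀ ε > 0, ∃ N : ℕ, ∀ n ≥ N,
    ∃ T : Matrix (Fin n → Fin d) (Fin n → Fin d) ℂ →
          Matrix (Fin ⌊(n : ℝ) * R⌋₊ → Fin 2) (Fin ⌊(n : ℝ) * R⌋₊ → Fin 2) ℂ,
      IsIncoherentOp T ∧ 1 - ε ≤ fidelity (T (tpow ρ n)) (tpow Phi2 ⌊(n : ℝ) * R⌋₊)

/-- Distillable coherence. -/
noncomputable def Cd {d : ℕ} (ρ : Matrix (Fin d) (Fin d) ℂ) : ℝ :=
  sSup {R | DistillRate ρ R}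

/-- `R` is an achievable coherence-formation rate for `ρ`. -/
def FormRate {d : ℕ} (ρ : Matrix (Fin d) (Fin d) ℂ) (R : ℝ) : Prop :=
  0 ≤ R ∧ ∀ ε > 0, ∃ N : ℕ, ∀ n ≥ N,
    ∃ T : Matrix (Fin ⌈(n : ℝ) * R⌉₊ → Fin 2) (Fin ⌈(n : ℝ) * R⌉₊ → Fin 2) ℂ →
          Matrix (Fin n → Fin d) (Fin n → Fin d) ℂ,
      IsIncoherentOp T ∧ 1 - ε ≤ fidelity (T (tpow Phi2 ⌈(n : ℝ) * R⌉₊)) (tpow ρ n)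

/-- Coherence cost. -/
noncomputable def Cc {d : ℕ} (ρ : Matrix (Fin d) (Fin d) ℂ) : ℝ :=
  sInf {R | FormRate ρ R}

/-- Sum of the `t` largest entries of the vector `p` (as a sup over size-`t` subsets). -/
noncomputable def sumTop (p : ι → ℝ) (t : ℕ) : ℝ :=
  sSup {x | ∃ A : Finset ι, A.card = t ∧ x = ∑ i ∈ A, p i}

/-- The spectrum of a Hermitian matrix (junk value `0` otherwise). -/
noncomputable def matSpectrum (A : Matrix ι ι ℂ) : ι → ℝ :=
  if h : A.IsHermitian then h.eigenvalues else 0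

/-- `A ≻ B`: the spectrum of `A` majorizes the spectrum of `B`. -/
def MajorizesMat (A B : Matrix ι ι ℂ) : Prop :=
  (∀ t : ℕ, sumTop (matSpectrum B) t ≤ sumTop (matSpectrum A) t) ∧
  ∑ i, matSpectrum A i = ∑ i, matSpectrum B i

theorem exists_equiv_comp_eq_of_map_univ_eq {α β γ : Type*} [Fintype α] [Fintype β]
    [DecidableEq γ] {f : α → γ} {g : β → γ}
    (h : Finset.univ.val.map f = Finset.univ.val.map g) : ∃ e : α ≃ β, g ∘ e = f := by
  classical
  have hcard : ∀ c, Fintype.card {a // f a = c} = Fintype.card {b // g b = c} := by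
    intro c
    have hc := congrArg (Multiset.count c) h
    simp only [Multiset.count_map, @eq_comm _ c] at hc
    simpa [Fintype.card_subtype, Finset.card_def, Finset.filter_val] using hc
  exact ⟨Equiv.ofFiberEquiv fun c => Fintype.equivOfCardEq (hcard c),
    funext (Equiv.ofFiberEquiv_map _)⟩

theorem matSpectrum_diagonal_ofReal {n : Type*} [Fintype n] [DecidableEq n] (f : n → ℝ) :
    ∃ e : n ≃ n, matSpectrum (diagonal fun i => (f i : ℂ)) = f ∘ e := by
  have hA : (diagonal fun i => (f i : ℂ)).IsHermitian :=
    isHermitian_diagonal_of_self_adjoint _ (funext fun i => Complex.conj_ofReal (f i))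
  have hroots := hA.roots_charpoly_eq_eigenvalues
  rw [charpoly_diagonal, Polynomial.roots_prod _ _ (by simp [Finset.prod_ne_zero_iff,
    Polynomial.X_sub_C_ne_zero])] at hroots
  simp only [Polynomial.roots_X_sub_C, Multiset.bind_singleton] at hroots
  rw [← Multiset.map_map] at hroots
  obtain ⟨e, he⟩ := exists_equiv_comp_eq_of_map_univ_eq <|
    Multiset.map_injective Complex.ofReal_injective (by simpa [Multiset.map_map] using hroots.symm)
  exact ⟨e, by rw [matSpectrum, dif_pos hA, he]⟩

section SumTop

variable {n : Type*}

theorem le_sumTop [Fintype n] (f : n → ℝ) (A : Finset n) : ∑ i ∈ A, f i ≤ sumTop f A.card := by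
  refine le_csSup ((Set.finite_range fun B : Finset n => ∑ i ∈ B, f i).subset ?_).bddAbove
    ⟨A, rfl, rfl⟩
  rintro _ ⟨B, -, rfl⟩
  exact ⟨B, rfl⟩

theorem sumTop_comp_equiv {m : Type*} [Fintype m] (f : n → ℝ) (e : m ≃ n) (t : ℕ) :
    sumTop (f ∘ e) t = sumTop f t := by
  unfold sumTop
  congr 1
  ext x
  constructor
  · rintro ⟨A, rfl, rfl⟩
    exact ⟨A.map e.toEmbedding, by simp, by simp [Finset.sum_map]⟩
  · rintro ⟨B, rfl, rfl⟩
    exact ⟨B.map e.symm.toEmbedding, by simp, by simp [Finset.sum_map]⟩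

theorem sumTop_le_sumTop [Fintype n] {f g : n → ℝ} {t : ℕ}
    (h : ∀ A : Finset n, A.card = t → ∑ i ∈ A, f i ≤ sumTop g t) : sumTop f t ≤ sumTop g t := by
  by_cases hA : ∃ A : Finset n, A.card = t
  · obtain ⟨A, hA⟩ := hA
    exact csSup_le ⟨_, A, hA, rfl⟩ (by rintro _ ⟨A, hA, rfl⟩; exact h A hA)
  · simp only [not_exists] at hA
    simp [sumTop, hA]

theorem sum_le_sumTop_of_card_le [Fintype n] {g : n → ℝ} (hg : 0 ≤ g) {B : Finset n} {t : ℕ}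
    (hB : B.card ≤ t) (ht : t ≤ Fintype.card n) : ∑ i ∈ B, g i ≤ sumTop g t := by
  obtain ⟨C, hBC, -, rfl⟩ :=
    Finset.exists_subsuperset_card_eq (Finset.subset_univ B) hB (by simpa using ht)
  exact (Finset.sum_le_sum_of_subset_of_nonneg hBC fun i _ _ => hg i).trans (le_sumTop g C)

end SumTop

def IsMixtureOfRelabelings {n : Type*} (p q : n → ℝ) : Prop :=
  ∃ (m : ℕ) (c : Fin m → ℝ) (σ : Fin m → n → n), (∀ ℓ, 0 ≤ c ℓ) ∧ ∑ ℓ, c ℓ = 1 ∧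
    (∀ ℓ, c ℓ ≠ 0 → Set.InjOn (σ ℓ) (Function.support p)) ∧
    ∀ i, p i ≠ 0 → p i = ∑ ℓ, c ℓ * q (σ ℓ i)

theorem IsMixtureOfRelabelings.sumTop_le {n : Type*} [Fintype n] {p q : n → ℝ}
    (h : IsMixtureOfRelabelings p q) (hq : 0 ≤ q) (t : ℕ) : sumTop p t ≤ sumTop q t := by
  classical
  obtain ⟨m, c, σ, hc0, hc1, hinj, hp⟩ := h
  refine sumTop_le_sumTop fun A hA => ?_
  set B := A.filter (p · ≠ 0)
  have hB : ∀ ℓ, c ℓ ≠ 0 → ∑ i ∈ B, q (σ ℓ i) ≤ sumTop q t := fun ℓ hℓ => by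
    rw [← Finset.sum_image (s := B) <| (hinj ℓ hℓ).mono fun x hx =>
      (Finset.mem_filter.1 (Finset.mem_coe.1 hx)).2]
    exact sum_le_sumTop_of_card_le hq
      (Finset.card_image_le.trans ((Finset.card_filter_le _ _).trans hA.le))
      (hA ▸ Finset.card_le_univ A)
  calc ∑ i ∈ A, p i = ∑ i ∈ B, p i := (Finset.sum_filter_ne_zero A).symm
    _ = ∑ ℓ, c ℓ * ∑ i ∈ B, q (σ ℓ i) := by
      simp_rw [Finset.mul_sum]
      rw [Finset.sum_comm]
      exact Finset.sum_congr rfl fun i hi => hp i (Finset.mem_filter.1 hi).2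
    _ ≤ ∑ ℓ, c ℓ * sumTop q t := Finset.sum_le_sum fun ℓ _ => by
      rcases eq_or_ne (c ℓ) 0 with h0 | h0
      · simp [h0]
      · exact mul_le_mul_of_nonneg_left (hB ℓ h0) (hc0 ℓ)
    _ = sumTop q t := by rw [← Finset.sum_mul, hc1, one_mul]

section PureState

variable {n : Type*}

theorem pureState_eq_vecMulVec (v : n → ℂ) : pureState v = vecMulVec v (star v) := rfl

theorem mul_pureState_mul_conjTranspose [Fintype n] {m : Type*} (K : Matrix m n ℂ)
    (v : n → ℂ) : K * pureState v * Kᴴ = pureState (K *ᵥ v) := by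
  simp only [pureState_eq_vecMulVec, mul_vecMulVec, vecMulVec_mul, star_mulVec]

theorem dephase_pureState [DecidableEq n] (v : n → ℂ) :
    dephase (pureState v) = diagonal fun i => ((‖v i‖ ^ 2 : ℝ) : ℂ) := by
  simp [dephase, pureState, Complex.mul_conj']

theorem rank_dephase_pureState [Fintype n] [DecidableEq n] (v : n → ℂ) :
    (dephase (pureState v)).rank = (Function.support v).ncard := by
  rw [dephase_pureState, rank_diagonal, ← Nat.card_eq_fintype_card, ← Nat.card_coe_set_eq]
  exact Nat.card_congr (Equiv.subtypeEquivRight fun i => by simp)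

theorem IsUnitVec.star_dotProduct_self [Fintype n] {v : n → ℂ} (hv : IsUnitVec v) :
    star v ⬝ᵥ v = 1 := by
  simp only [dotProduct, Pi.star_apply, Complex.star_def, Complex.conj_mul']
  exact_mod_cast hv

theorem star_dotProduct_pureState_mulVec [Fintype n] (a x : n → ℂ) :
    star x ⬝ᵥ (pureState a *ᵥ x) = ((‖star x ⬝ᵥ a‖ ^ 2 : ℝ) : ℂ) := by
  rw [pureState_eq_vecMulVec, vecMulVec_mulVec, op_smul_eq_smul, dotProduct_smul, smul_eq_mul,
    star_dotProduct a, mul_comm, Complex.star_def, Complex.mul_conj', Complex.ofReal_pow]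

variable [Fintype n] {l : Type*} [Fintype l]

theorem sum_norm_sq_star_dotProduct_of_sum_pureState_eq {u : l → n → ℂ} {w : n → ℂ}
    (h : ∑ ℓ, pureState (u ℓ) = pureState w) (x : n → ℂ) :
    ∑ ℓ, ‖star x ⬝ᵥ u ℓ‖ ^ 2 = ‖star x ⬝ᵥ w‖ ^ 2 := by
  have hx := congrArg (fun M => star x ⬝ᵥ (M *ᵥ x)) h
  simp only [Matrix.sum_mulVec, dotProduct_sum, star_dotProduct_pureState_mulVec] at hx
  exact_mod_cast hx

theorem exists_smul_of_sum_pureState_eq {u : l → n → ℂ} {w : n → ℂ} (hw : IsUnitVec w)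
    (h : ∑ ℓ, pureState (u ℓ) = pureState w) :
    ∃ μ : l → ℂ, ∑ ℓ, ‖μ ℓ‖ ^ 2 = 1 ∧ ∀ ℓ, u ℓ = μ ℓ • w := by
  have hww := hw.star_dotProduct_self
  refine ⟨fun ℓ => star w ⬝ᵥ u ℓ, by simpa [hww] using
    sum_norm_sq_star_dotProduct_of_sum_pureState_eq h w, fun ℓ => ?_⟩
  -- `r` is orthogonal to `w`; testing `h` against `r` makes it orthogonal to `u ℓ` too, so `r = 0`.
  set r := u ℓ - (star w ⬝ᵥ u ℓ) • w
  have hwr : star w ⬝ᵥ r = 0 := by simp [r, dotProduct_sub, dotProduct_smul, hww]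
  have hrw : star r ⬝ᵥ w = 0 := by rw [star_dotProduct, hwr, star_zero]
  have hru : star r ⬝ᵥ u ℓ = 0 := by
    have hsum := sum_norm_sq_star_dotProduct_of_sum_pureState_eq h r
    rw [hrw, norm_zero, zero_pow two_ne_zero,
      Finset.sum_eq_zero_iff_of_nonneg fun _ _ => sq_nonneg _] at hsum
    simpa using hsum ℓ (Finset.mem_univ ℓ)
  have hrr : star r ⬝ᵥ r = 0 := calc
    star r ⬝ᵥ r = star r ⬝ᵥ (u ℓ - (star w ⬝ᵥ u ℓ) • w) := rfl
    _ = 0 := by rw [dotProduct_sub, dotProduct_smul, hru, hrw, smul_zero, sub_zero]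
  exact sub_eq_zero.1 (dotProduct_star_self_eq_zero.1 hrr)

end PureState

section IncoherentKraus

variable {n m : Type*} [Fintype n] {K : Matrix m n ℂ} {J : n → m}

theorem mulVec_apply_eq_of_injOn (hJ : ∀ i j, K j i ≠ 0 → j = J i) {v : n → ℂ}
    (hinj : Set.InjOn J (Function.support v)) {i : n} (hi : v i ≠ 0) :
    (K *ᵥ v) (J i) = K (J i) i * v i := by
  refine Finset.sum_eq_single i (fun i' _ hne => ?_) (by simp)
  by_contra h
  exact hne (hinj (right_ne_zero_of_mul h) hi (hJ i' (J i) (left_ne_zero_of_mul h)).symm)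

theorem support_mulVec_subset_image (hJ : ∀ i j, K j i ≠ 0 → j = J i) (v : n → ℂ) :
    Function.support (K *ᵥ v) ⊆ J '' Function.support v := fun j hj => by
  obtain ⟨i, -, hi⟩ := Finset.exists_ne_zero_of_sum_ne_zero hj
  exact ⟨i, right_ne_zero_of_mul hi, (hJ i j (left_ne_zero_of_mul hi)).symm⟩

theorem bijOn_support_of_mulVec_eq_smul [Finite m] (hJ : ∀ i j, K j i ≠ 0 → j = J i)
    {v : n → ℂ} {w : m → ℂ} {μ : ℂ} (hμ : μ ≠ 0) (hKv : K *ᵥ v = μ • w)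
    (hcard : (Function.support v).ncard ≤ (Function.support w).ncard) :
    Set.BijOn J (Function.support v) (Function.support w) := by
  have hsub : Function.support w ⊆ J '' Function.support v := by
    simpa [hKv, Function.support_const_smul_of_ne_zero _ _ hμ] using
      support_mulVec_subset_image hJ v
  have himage : J '' Function.support v = Function.support w :=
    (Set.eq_of_subset_of_ncard_le hsub ((Set.ncard_image_le).trans hcard)).symm
  have hinj : Set.InjOn J (Function.support v) :=
    Set.injOn_of_ncard_image_eq (le_antisymm Set.ncard_image_le (himage ▸ hcard))
  exact himage ▸ hinj.bijOn_image

theorem norm_sq_mul_norm_sq_le [Finite m] (hJ : ∀ i j, K j i ≠ 0 → j = J i) {v : n → ℂ}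
    {w : m → ℂ} {μ : ℂ} (hKv : K *ᵥ v = μ • w)
    (hcard : (Function.support v).ncard ≤ (Function.support w).ncard) {i : n} (hi : v i ≠ 0) :
    ‖μ‖ ^ 2 * ‖w (J i)‖ ^ 2 ≤ ‖K (J i) i‖ ^ 2 * ‖v i‖ ^ 2 := by
  rcases eq_or_ne μ 0 with hμ | hμ
  · rw [hμ, norm_zero, zero_pow two_ne_zero, zero_mul]
    positivity
  · have hinj := (bijOn_support_of_mulVec_eq_smul hJ hμ hKv hcard).injOn
    have h := congrArg (‖·‖ ^ 2) ((congrFun hKv (J i)).symm.trans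
      (mulVec_apply_eq_of_injOn hJ hinj hi))
    simpa [norm_mul, mul_pow] using h.le

end IncoherentKraus

theorem sum_norm_sq_apply_le_one {n m l : Type*} [Fintype n] [DecidableEq n] [Fintype m]
    [Fintype l] {K : l → Matrix m n ℂ} (hK : ∑ ℓ, (K ℓ)ᴴ * K ℓ = 1) (J : l → m) (i : n) :
    ∑ ℓ, ‖K ℓ (J ℓ) i‖ ^ 2 ≤ 1 := by
  have hcol : ∑ ℓ, ∑ j, ‖K ℓ j i‖ ^ 2 = 1 := by
    have hii := congrFun (congrFun hK i) i
    simp only [Matrix.sum_apply, mul_apply, conjTranspose_apply, Complex.star_def,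
      Complex.conj_mul', one_apply_eq] at hii
    exact_mod_cast hii
  exact hcol ▸ Finset.sum_le_sum fun ℓ _ =>
    Finset.single_le_sum (fun j _ => sq_nonneg ‖K ℓ j i‖) (Finset.mem_univ (J ℓ))

theorem IsIncoherentOp.isMixtureOfRelabelings {n : Type*} [Fintype n] [DecidableEq n]
    {T : Matrix n n ℂ → Matrix n n ℂ} (hT : IsIncoherentOp T) {v w : n → ℂ}
    (hv : IsUnitVec v) (hw : IsUnitVec w)
    (hcard : (Function.support v).ncard ≤ (Function.support w).ncard)
    (hTv : T (pureState v) = pureState w) :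
    IsMixtureOfRelabelings (fun i => ‖v i‖ ^ 2) (fun j => ‖w j‖ ^ 2) := by
  classical
  obtain ⟨m, K, hinc, hK, hrep⟩ := hT
  choose J hJ using hinc
  obtain ⟨μ, hμ1, hKv⟩ := exists_smul_of_sum_pureState_eq (u := fun ℓ => K ℓ *ᵥ v) hw <| by
    simpa [← mul_pureState_mul_conjTranspose, ← hrep] using hTv
  have hbij ℓ (hℓ : μ ℓ ≠ 0) := bijOn_support_of_mulVec_eq_smul (hJ ℓ) hℓ (hKv ℓ) hcard
  have hsupp : Function.support (fun i => ‖v i‖ ^ 2) = Function.support v := by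
    ext i; simp
  refine ⟨m, fun ℓ => ‖μ ℓ‖ ^ 2, J, fun ℓ => by positivity, hμ1,
    fun ℓ hℓ => hsupp ▸ (hbij ℓ (by simpa using hℓ)).injOn, ?_⟩
  set S := (Function.support v).toFinset
  have hle : ∀ i ∈ S, ∑ ℓ, ‖μ ℓ‖ ^ 2 * ‖w (J ℓ i)‖ ^ 2 ≤ ‖v i‖ ^ 2 := fun i hi => by
    have hvi : v i ≠ 0 := by simpa [S] using hi
    calc ∑ ℓ, ‖μ ℓ‖ ^ 2 * ‖w (J ℓ i)‖ ^ 2 ≤ ∑ ℓ, ‖K ℓ (J ℓ i) i‖ ^ 2 * ‖v i‖ ^ 2 :=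
          Finset.sum_le_sum fun ℓ _ => norm_sq_mul_norm_sq_le (hJ ℓ) (hKv ℓ) hcard hvi
      _ ≤ ‖v i‖ ^ 2 := by
          rw [← Finset.sum_mul]
          exact mul_le_of_le_one_left (by positivity) (sum_norm_sq_apply_le_one hK _ i)
  have hsum_support : ∀ u : n → ℂ, IsUnitVec u →
      ∑ i ∈ (Function.support u).toFinset, ‖u i‖ ^ 2 = 1 := fun u hu =>
    (Finset.sum_subset (Finset.subset_univ _) (by simp)).trans hu
  have hsum_w : ∀ ℓ, μ ℓ ≠ 0 → ∑ i ∈ S, ‖w (J ℓ i)‖ ^ 2 = 1 := fun ℓ hℓ => by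
    rw [← hsum_support w hw]
    exact Finset.sum_nbij (J ℓ)
      (fun i hi => by simpa [S] using (hbij ℓ hℓ).mapsTo (by simpa [S] using hi))
      (by simpa [S] using (hbij ℓ hℓ).injOn) (by simpa [S] using (hbij ℓ hℓ).surjOn)
      fun _ _ => rfl
  have hsum : ∑ i ∈ S, ∑ ℓ, ‖μ ℓ‖ ^ 2 * ‖w (J ℓ i)‖ ^ 2 = ∑ i ∈ S, ‖v i‖ ^ 2 := by
    rw [hsum_support v hv, Finset.sum_comm, ← hμ1]
    refine Finset.sum_congr rfl fun ℓ _ => ?_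
    rcases eq_or_ne (μ ℓ) 0 with h0 | h0
    · simp [h0]
    · rw [← Finset.mul_sum, hsum_w ℓ h0, mul_one]
  intro i hi
  exact ((Finset.sum_eq_sum_iff_of_le hle).1 hsum i (by simpa [S] using hi)).symm

/-- If an incoherent operation transforms the pure state `φ` into the
pure state `ψ` and `rank Δ(φ) = rank Δ(ψ)`, then `Δ(ψ) ≻ Δ(φ)`. -/
theorem IC_rank_eq_implies_majorization {d : ℕ} (v w : Fin d → ℂ)
    (hv : IsUnitVec v) (hw : IsUnitVec w)
    (hrank : (dephase (pureState v)).rank = (dephase (pureState w)).rank)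
    (T : Matrix (Fin d) (Fin d) ℂ → Matrix (Fin d) (Fin d) ℂ)
    (hT : IsIncoherentOp T) (hTv : T (pureState v) = pureState w) :
    MajorizesMat (dephase (pureState w)) (dephase (pureState v)) := by
  have hmix := hT.isMixtureOfRelabelings hv hw
    (by rw [← rank_dephase_pureState, ← rank_dephase_pureState, hrank]) hTv
  obtain ⟨ev, hev⟩ := matSpectrum_diagonal_ofReal fun i => ‖v i‖ ^ 2
  obtain ⟨ew, hew⟩ := matSpectrum_diagonal_ofReal fun j => ‖w j‖ ^ 2
  rw [MajorizesMat, dephase_pureState, dephase_pureState, hev, hew]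
  refine ⟨fun t => ?_, ?_⟩
  · rw [sumTop_comp_equiv, sumTop_comp_equiv]
    exact hmix.sumTop_le (fun j => sq_nonneg ‖w j‖) t
  · exact (Equiv.sum_comp ew _).trans <| hw.trans <| hv.symm.trans (Equiv.sum_comp ev _).symm

end Coherence
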